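/- Error representation of the second-order generalized Trotter formula: for every h ≥ 0 one has U_{g,2}(h,0) - U(h,0) = ∫₀^h U(h,s) · exp(-i (∫_{s/2}^{s} f1(s')ds') H1) · E_{g,2}(s) · exp(-i (∫₀^{s} f2(s')ds') H2) · exp(-i (∫₀^{s/2} f1(s')ds') H1) ds, where, writing Conj1(s)(B) = exp(i (∫_{s/2}^{s} f1(s')ds') H1) B exp(-i (∫_{s/2}^{s} f1(s')ds') H1) and Conj2(s)(B) = exp(-i (∫₀^{s} f2(s')ds') H2) B exp(i (∫₀^{s} f2(s')ds') H2), one has for r ≥ 0: E_{g,2}(r) = -(r/2) f1(0) (∫₀^r f2'(s)ds) [H1,H2] + (r/4) f2(0) (∫₀^r f1'(s/2)ds) [H1,H2] - f2(r) ∫₀^r (f1'(s) - (1/4) f1'(s/2)) · Conj1(s)([H1,H2]) · (r-s) ds + (1/2) f1(r/2) ∫₀^r f2'(s) · Conj2(s)([H1,H2]) · (r-s) ds - i f2(r) ∫₀^r (f1(s) - (1/2) f1(s/2))² · Conj1(s)([H1,[H1,H2]]) · (r-s) ds + (i/2) f1(r/2) ∫₀^r f2(s)² · Conj2(s)([H2,[H2,H1]])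 · (r-s) ds. -/

import Mathlib

/-!
Let `W s = U_{g,2}(s,0)`. Since `U` is unitary, `U(h,s) = U(h,0) U(s,0)⋆`, and differentiating
`s ↦ U(h,0) U(s,0)⋆ W s` gives the Duhamel formula
`W h - U(h,0) = ∫₀ʰ U(h,s) (W' s + i H(s) W s) ds`.
With `α = ∫_{s/2}^s f1`, `β = ∫_0^s f2`, `γ = ∫_0^{s/2} f1`, the product rule and moving `H(s)`
through the exponentials give `W' + i H W = e^{-iαH1} D(s) e^{-iβH2} e^{-iγH1}` with
`D(s) = i f2(s) (Conj1(H2) - H2) + (i/2) f1(s/2) (H1 - Conj2(H1))`.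
A conjugation `s ↦ e^{z(s)M} B e^{-z(s)M}` has derivative `z' e^{zM} [M,B] e^{-zM}`, so the
second-order Taylor formula with integral remainder for `Conj1(H2)` and `Conj2(H1)` turns `D(s)`
into `E_{g,2}(s)`.
-/

open scoped Matrix.Norms.L2Operator
open MeasureTheory

noncomputable section

/-- Square `n × n` complex matrices. -/
abbrev Mat (n : ℕ) := Matrix (Fin n) (Fin n) ℂ

/-- The matrix exponential. -/
noncomputable def mexp {n : ℕ} (A : Mat n) : Mat n := NormedSpace.exp A

/-- The commutator `[A,B] = AB - BA`. -/
def matComm {n : ℕ} (A B : Mat n) : Mat n := A * B - B * A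

/-- The time-dependent Hamiltonian `H(t) = f1(t) H1 + f2(t) H2`. -/
def Ham {n : ℕ} (H1 H2 : Mat n) (f1 f2 : ℝ → ℝ) (t : ℝ) : Mat n :=
  (f1 t : ℂ) • H1 + (f2 t : ℂ) • H2

/-- `IsEvolution H1 H2 f1 f2 U` : `U t s` is the evolution operator, i.e. it solves
`∂ₜ U(t,s) = -i H(t) U(t,s)` with `U(s,s) = I`. -/
def IsEvolution {n : ℕ} (H1 H2 : Mat n) (f1 f2 : ℝ → ℝ) (U : ℝ → ℝ → Mat n) : Prop :=
  (∀ s : ℝ, U s s = 1) ∧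
    ∀ s t : ℝ, HasDerivAt (fun τ => U τ s) ((-Complex.I) • (Ham H1 H2 f1 f2 t * U t s)) t

/-- First-order standard Trotter step from time `a` to time `b`:
`U_{s,1}(b,a) = exp(-i (b-a) f2(b) H2) exp(-i (b-a) f1(b) H1)`. -/
noncomputable def Us1 {n : ℕ} (H1 H2 : Mat n) (f1 f2 : ℝ → ℝ) (b a : ℝ) : Mat n :=
  mexp ((-Complex.I * (((b - a) * f2 b : ℝ) : ℂ)) • H2) *
    mexp ((-Complex.I * (((b - a) * f1 b : ℝ) : ℂ)) • H1)

/-- First-order generalized Trotter step from time `a` to time `b`: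
`U_{g,1}(b,a) = exp(-i (∫_a^b f2) H2) exp(-i (∫_a^b f1) H1)`. -/
noncomputable def Ug1 {n : ℕ} (H1 H2 : Mat n) (f1 f2 : ℝ → ℝ) (b a : ℝ) : Mat n :=
  mexp ((-Complex.I * ((∫ s in a..b, f2 s : ℝ) : ℂ)) • H2) *
    mexp ((-Complex.I * ((∫ s in a..b, f1 s : ℝ) : ℂ)) • H1)

/-- Second-order standard Trotter step from time `a` to time `b` (with midpoint `(a+b)/2`):
`U_{s,2}(b,a) = exp(-i (b-a)/2 f1((a+b)/2) H1) exp(-i (b-a) f2((a+b)/2) H2)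
  exp(-i (b-a)/2 f1((a+b)/2) H1)`. -/
noncomputable def Us2 {n : ℕ} (H1 H2 : Mat n) (f1 f2 : ℝ → ℝ) (b a : ℝ) : Mat n :=
  mexp ((-Complex.I * (((b - a) / 2 * f1 ((a + b) / 2) : ℝ) : ℂ)) • H1) *
    mexp ((-Complex.I * (((b - a) * f2 ((a + b) / 2) : ℝ) : ℂ)) • H2) *
    mexp ((-Complex.I * (((b - a) / 2 * f1 ((a + b) / 2) : ℝ) : ℂ)) • H1)

/-- Second-order generalized Trotter step from time `a` to time `b`:
`U_{g,2}(b,a) = exp(-i (∫_{(a+b)/2}^b f1) H1) exp(-i (∫_a^b f2) H2)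
  exp(-i (∫_a^{(a+b)/2} f1) H1)`. -/
noncomputable def Ug2 {n : ℕ} (H1 H2 : Mat n) (f1 f2 : ℝ → ℝ) (b a : ℝ) : Mat n :=
  mexp ((-Complex.I * ((∫ s in ((a + b) / 2)..b, f1 s : ℝ) : ℂ)) • H1) *
    mexp ((-Complex.I * ((∫ s in a..b, f2 s : ℝ) : ℂ)) • H2) *
    mexp ((-Complex.I * ((∫ s in a..((a + b) / 2), f1 s : ℝ) : ℂ)) • H1)

/-- `Conj1 H1 f1 s B = exp(i (∫_{s/2}^{s} f1) H1) B exp(-i (∫_{s/2}^{s} f1) H1)`. -/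
noncomputable def Conj1 {n : ℕ} (H1 : Mat n) (f1 : ℝ → ℝ) (s : ℝ) (B : Mat n) : Mat n :=
  mexp ((Complex.I * ((∫ s' in (s/2)..s, f1 s' : ℝ) : ℂ)) • H1) * B *
    mexp ((-Complex.I * ((∫ s' in (s/2)..s, f1 s' : ℝ) : ℂ)) • H1)

/-- `Conj2 H2 f2 s B = exp(-i (∫_0^s f2) H2) B exp(i (∫_0^s f2) H2)`. -/
noncomputable def Conj2 {n : ℕ} (H2 : Mat n) (f2 : ℝ → ℝ) (s : ℝ) (B : Mat n) : Mat n :=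
  mexp ((-Complex.I * ((∫ s' in (0:ℝ)..s, f2 s' : ℝ) : ℂ)) • H2) * B *
    mexp ((Complex.I * ((∫ s' in (0:ℝ)..s, f2 s' : ℝ) : ℂ)) • H2)

/-- The integrand appearing in the error representation of the second-order generalized
Trotter formula. -/
noncomputable def Eg2 {n : ℕ} (H1 H2 : Mat n) (f1 f2 : ℝ → ℝ) (r : ℝ) : Mat n :=
  ((-(r / 2) * f1 0 * ∫ s in (0:ℝ)..r, deriv f2 s : ℝ) : ℂ) • matComm H1 H2
  + (((r / 4) * f2 0 * ∫ s in (0:ℝ)..r, deriv f1 (s / 2) : ℝ) : ℂ) • matComm H1 H2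
  - (∫ s in (0:ℝ)..r, ((f2 r * (deriv f1 s - (1/4) * deriv f1 (s/2)) * (r - s) : ℝ) : ℂ) •
      Conj1 H1 f1 s (matComm H1 H2))
  + (∫ s in (0:ℝ)..r, (((1/2) * f1 (r/2) * deriv f2 s * (r - s) : ℝ) : ℂ) •
      Conj2 H2 f2 s (matComm H1 H2))
  - Complex.I • (∫ s in (0:ℝ)..r, ((f2 r * (f1 s - (1/2) * f1 (s/2))^2 * (r - s) : ℝ) : ℂ) •
      Conj1 H1 f1 s (matComm H1 (matComm H1 H2)))
  + (Complex.I / 2) • (∫ s in (0:ℝ)..r, ((f1 (r/2) * (f2 s)^2 * (r - s) : ℝ) : ℂ) •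
      Conj2 H2 f2 s (matComm H2 (matComm H2 H1)))


section Taylor

variable {E : Type*} [NormedAddCommGroup E] [NormedSpace ℝ E] [CompleteSpace E]

theorem taylor_integral_remainder_order_two {φ φ' φ'' : ℝ → E}
    (hφ : ∀ s, HasDerivAt φ (φ' s) s) (hφ' : ∀ s, HasDerivAt φ' (φ'' s) s)
    (hφ'' : Continuous φ'') (r : ℝ) :
    φ r = φ 0 + r • φ' 0 + ∫ s in (0 : ℝ)..r, (r - s) • φ'' s := by
  have hF : ∀ s, HasDerivAt (fun s => (r - s) • φ' s + φ s) ((r - s) • φ'' s) s := fun s =>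
    ((((hasDerivAt_id s).const_sub r).smul (hφ' s)).add (hφ s)).congr_deriv (by simp)
  rw [intervalIntegral.integral_eq_sub_of_hasDerivAt (fun s _ => hF s)
    (((continuous_const.sub continuous_id).smul hφ'').intervalIntegrable _ _)]
  simp only [sub_self, zero_smul, zero_add, sub_zero]
  abel

end Taylor

section ExpConj

open NormedSpace

variable {𝔸 : Type*} [NormedRing 𝔸] [NormedAlgebra ℂ 𝔸]

theorem commute_exp_smul (M : 𝔸) (z : ℂ) : Commute M (exp (z • M)) :=
  ((Commute.refl M).smul_right z).exp_right

def expConj (M : 𝔸) (z : ℂ) (B : 𝔸) : 𝔸 := exp (z • M) * B * exp ((-z) • M)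

@[simp]
theorem expConj_zero (M B : 𝔸) : expConj M 0 B = B := by
  simp [expConj]

@[simp]
theorem expConj_neg_right (M B : 𝔸) (z : ℂ) : expConj M z (-B) = -expConj M z B := by
  simp [expConj]

variable [CompleteSpace 𝔸]

theorem exp_add_smul (M : 𝔸) (z w : ℂ) : exp ((z + w) • M) = exp (z • M) * exp (w • M) := by
  -- `exp` does not depend on the choice of `ℚ`-algebra structure, so any one will do
  let : NormedAlgebra ℚ 𝔸 := NormedAlgebra.restrictScalars ℚ ℂ 𝔸
  rw [add_smul, exp_add_of_commute (((Commute.refl M).smul_left z).smul_right w)]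

theorem exp_neg_smul_mul_exp_smul (M : 𝔸) (z : ℂ) : exp ((-z) • M) * exp (z • M) = 1 := by
  rw [← exp_add_smul, neg_add_cancel, zero_smul, exp_zero]

@[fun_prop]
theorem continuous_exp_smul {g : ℝ → ℂ} (hg : Continuous g) (M : 𝔸) :
    Continuous fun s => exp (g s • M) := by
  let : NormedAlgebra ℚ 𝔸 := NormedAlgebra.restrictScalars ℚ ℂ 𝔸
  fun_prop

theorem hasDerivAt_exp_smul {g : ℝ → ℂ} {g' : ℂ} {t : ℝ} (M : 𝔸) (hg : HasDerivAt g g' t) :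
    HasDerivAt (fun s => exp (g s • M)) (g' • (M * exp (g t • M))) t :=
  (hasDerivAt_exp_smul_const' M (g t)).scomp t hg

variable (M B : 𝔸)

theorem exp_neg_smul_mul_expConj_mul (z : ℂ) (X : 𝔸) :
    exp ((-z) • M) * (expConj M z B * X) = B * (exp ((-z) • M) * X) := by
  simp only [expConj, ← mul_assoc, exp_neg_smul_mul_exp_smul, one_mul]

theorem expConj_mul_exp_smul_mul (z : ℂ) (X : 𝔸) :
    expConj M z B * (exp (z • M) * X) = exp (z • M) * (B * X) := by
  simp only [expConj, mul_assoc, ← mul_assoc (exp ((-z) • M)), exp_neg_smul_mul_exp_smul, one_mul]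

theorem hasDerivAt_expConj {g : ℝ → ℂ} {g' : ℂ} {t : ℝ} (hg : HasDerivAt g g' t) :
    HasDerivAt (fun s => expConj M (g s) B) (g' • expConj M (g t) ⁅M, B⁆) t := by
  refine (((hasDerivAt_exp_smul M hg).mul_const B).mul
    (hasDerivAt_exp_smul M hg.neg)).congr_deriv ?_
  simp only [expConj, Ring.lie_def, Pi.neg_apply, smul_mul_assoc, mul_smul_comm, mul_sub, sub_mul,
    smul_sub, neg_smul, mul_neg, mul_assoc, (commute_exp_smul M _).eq]
  abel

@[fun_prop]
theorem continuous_expConj {g : ℝ → ℂ} (hg : Continuous g) :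
    Continuous fun s => expConj M (g s) B := by
  unfold expConj
  fun_prop

theorem expConj_ofReal_eq_add_integral {θ θ' θ'' : ℝ → ℝ} (c : ℂ) (hθ0 : θ 0 = 0)
    (hθ : ∀ s, HasDerivAt θ (θ' s) s) (hθ' : ∀ s, HasDerivAt θ' (θ'' s) s)
    (hθ'' : Continuous θ'') (r : ℝ) :
    expConj M (c * θ r) B = B + (c * (r * θ' 0 : ℝ)) • ⁅M, B⁆
      + c • (∫ s in (0 : ℝ)..r, ((θ'' s * (r - s) : ℝ) : ℂ) • expConj M (c * θ s) ⁅M, B⁆)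
      + c ^ 2 • ∫ s in (0 : ℝ)..r, ((θ' s ^ 2 * (r - s) : ℝ) : ℂ) •
          expConj M (c * θ s) ⁅M, ⁅M, B⁆⁆ := by
  have hcθ : ∀ s, HasDerivAt (fun s => c * (θ s : ℂ)) (c * θ' s) s := fun s =>
    (hθ s).ofReal_comp.const_mul c
  have hcθ' : ∀ s, HasDerivAt (fun s => c * (θ' s : ℂ)) (c * θ'' s) s := fun s =>
    (hθ' s).ofReal_comp.const_mul c
  have hcont : ∀ X, Continuous fun s => expConj M (c * θ s) X := fun X =>
    continuous_expConj M X (continuous_iff_continuousAt.2 fun s => (hcθ s).continuousAt)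
  have hθ'c : Continuous θ' := continuous_iff_continuousAt.2 fun s => (hθ' s).continuousAt
  have hφ'' : Continuous fun s => (c * θ' s) • (c * θ' s) • expConj M (c * θ s) ⁅M, ⁅M, B⁆⁆
      + (c * θ'' s) • expConj M (c * θ s) ⁅M, B⁆ := by fun_prop
  rw [taylor_integral_remainder_order_two (fun s => hasDerivAt_expConj M B (hcθ s))
    (fun s => (hcθ' s).smul (hasDerivAt_expConj M ⁅M, B⁆ (hcθ s))) hφ'' r,
    hθ0, Complex.ofReal_zero, mul_zero, expConj_zero, expConj_zero,
    add_assoc (B + _ • ⁅M, B⁆), ← intervalIntegral.integral_smul,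
    ← intervalIntegral.integral_smul, ← intervalIntegral.integral_add]
  · congr 2
    · push_cast
      module
    · funext s
      push_cast
      module
  all_goals exact Continuous.intervalIntegrable (by fun_prop) _ _

end ExpConj

section Propagator

variable {ι : Type*} [Fintype ι] [DecidableEq ι]

def IsPropagator (H : ℝ → Matrix ι ι ℂ) (U : ℝ → ℝ → Matrix ι ι ℂ) : Prop :=
  (∀ s, U s s = 1) ∧ ∀ s t, HasDerivAt (fun τ => U τ s) ((-Complex.I) • (H t * U t s)) t

namespace IsPropagator

variable {H : ℝ → Matrix ι ι ℂ} {U : ℝ → ℝ → Matrix ι ι ℂ}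
  (hU : IsPropagator H U) (hH : ∀ t, (H t).IsHermitian)
include hU hH

theorem hasDerivAt_star (s t : ℝ) :
    HasDerivAt (fun τ => star (U τ s)) (Complex.I • (star (U t s) * H t)) t := by
  refine (hU.2 s t).star.congr_deriv ?_
  rw [star_smul, star_mul, Matrix.star_eq_conjTranspose (H t), (hH t).eq]
  simp

theorem star_mul_eq (τ r s : ℝ) : star (U τ r) * U τ s = star (U s r) := by
  have hconst : ∀ t, HasDerivAt (fun τ => star (U τ r) * U τ s) 0 t := fun t => by
    refine ((hasDerivAt_star hU hH r t).mul (hU.2 s t)).congr_deriv ?_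
    rw [smul_mul_assoc, mul_smul_comm, mul_assoc, neg_smul, add_neg_cancel]
  rw [is_const_of_deriv_eq_zero (fun t => (hconst t).differentiableAt)
    (fun t => (hconst t).deriv) τ s, hU.1 s, mul_one]

theorem eq_mul_star (t r s : ℝ) : U t s = U t r * star (U s r) := by
  have hunit : U t r * star (U t r) = 1 :=
    mul_eq_one_comm.mp (by rw [star_mul_eq hU hH, hU.1 r, star_one])
  rw [← star_mul_eq hU hH t r s, ← mul_assoc, hunit, one_mul]

theorem duhamel {W W' : ℝ → Matrix ι ι ℂ} {a b : ℝ} (hW : ∀ s, HasDerivAt W (W' s) s)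
    (hD : IntervalIntegrable (fun s => W' s + Complex.I • (H s * W s)) volume a b) :
    W b - U b a * W a = ∫ s in a..b, U b s * (W' s + Complex.I • (H s * W s)) := by
  have hΦ : ∀ s, HasDerivAt (fun s => U b a * (star (U s a) * W s))
      (U b a * star (U s a) * (W' s + Complex.I • (H s * W s))) s := fun s => by
    refine (((hasDerivAt_star hU hH a s).mul (hW s)).const_mul (U b a)).congr_deriv ?_
    simp only [smul_mul_assoc, mul_add, mul_smul_comm, mul_assoc, add_comm]
  have hcont : Continuous fun s => U b a * star (U s a) :=
    continuous_const.mul (continuous_iff_continuousAt.2 fun s => (hU.2 a s).continuousAt.star)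
  calc W b - U b a * W a = U b a * (star (U b a) * W b) - U b a * (star (U a a) * W a) := by
        rw [hU.1 a, star_one, one_mul, ← mul_assoc, ← eq_mul_star hU hH, hU.1, one_mul]
    _ = ∫ s in a..b, U b a * star (U s a) * (W' s + Complex.I • (H s * W s)) :=
        (intervalIntegral.integral_eq_sub_of_hasDerivAt (fun s _ => hΦ s)
          (hD.continuousOn_mul hcont.continuousOn)).symm
    _ = ∫ s in a..b, U b s * (W' s + Complex.I • (H s * W s)) := by
        simp_rw [← eq_mul_star hU hH]

end IsPropagator

end Propagator

section ScalarPhases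

variable {f : ℝ → ℝ}

theorem hasDerivAt_integral_div (hf : Continuous f) (a c s : ℝ) :
    HasDerivAt (fun s => ∫ x in a..s / c, f x) (f (s / c) / c) s := by
  have := (hf.integral_hasStrictDerivAt a (s / c)).hasDerivAt.comp s
    ((hasDerivAt_id' s).div_const c)
  exact this.congr_deriv (by ring)

theorem hasDerivAt_integral_div_self (hf : Continuous f) (c s : ℝ) :
    HasDerivAt (fun s => ∫ x in s / c..s, f x) (f s - f (s / c) / c) s :=
  ((hf.integral_hasStrictDerivAt 0 s).hasDerivAt.sub
    (hasDerivAt_integral_div hf 0 c s)).congr_of_eventuallyEq (Filter.Eventually.of_forall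
      fun _ => (intervalIntegral.integral_interval_sub_left (hf.intervalIntegrable _ _)
        (hf.intervalIntegrable _ _)).symm)

theorem continuous_integral_div (hf : Continuous f) (a c : ℝ) :
    Continuous fun s => ∫ x in a..s / c, f x :=
  continuous_iff_continuousAt.2 fun s => (hasDerivAt_integral_div hf a c s).continuousAt

theorem continuous_integral_div_self (hf : Continuous f) (c : ℝ) :
    Continuous fun s => ∫ x in s / c..s, f x :=
  continuous_iff_continuousAt.2 fun s => (hasDerivAt_integral_div_self hf c s).continuousAt

theorem hasDerivAt_sub_half_mul_comp_half (hf : Differentiable ℝ f) (s : ℝ) :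
    HasDerivAt (fun s => f s - 1 / 2 * f (s / 2)) (deriv f s - 1 / 4 * deriv f (s / 2)) s :=
  ((hf s).hasDerivAt.sub (((hf (s / 2)).hasDerivAt.comp s
    ((hasDerivAt_id s).div_const 2)).const_mul (1 / 2))).congr_deriv (by simp; ring)

end ScalarPhases

section Trotter

attribute [local instance] LieRing.ofAssociativeRing

variable {n : ℕ} (H1 H2 : Mat n) {f1 f2 : ℝ → ℝ}

theorem isHermitian_Ham (hH1 : H1.IsHermitian) (hH2 : H2.IsHermitian) (t : ℝ) :
    (Ham H1 H2 f1 f2 t).IsHermitian :=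
  (hH1.smul (Complex.conj_ofReal _)).add (hH2.smul (Complex.conj_ofReal _))

theorem matComm_eq_lie (A B : Mat n) : matComm A B = ⁅A, B⁆ :=
  (Ring.lie_def A B).symm

theorem Conj1_eq_expConj (s : ℝ) (B : Mat n) :
    Conj1 H1 f1 s B = expConj H1 (Complex.I * (∫ x in s / 2..s, f1 x : ℝ)) B := by
  simp only [Conj1, expConj, mexp, neg_mul]

theorem Conj2_eq_expConj (s : ℝ) (B : Mat n) :
    Conj2 H2 f2 s B = expConj H2 (-Complex.I * (∫ x in (0 : ℝ)..s, f2 x : ℝ)) B := by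
  simp only [Conj2, expConj, mexp, neg_mul, neg_neg]

theorem Conj1_eq_add_integral (hf1 : ContDiff ℝ 1 f1) (r : ℝ) (B : Mat n) :
    Conj1 H1 f1 r B = B + (Complex.I * (r * f1 0 / 2 : ℝ)) • ⁅H1, B⁆
      + Complex.I • (∫ s in (0 : ℝ)..r,
          (((deriv f1 s - 1 / 4 * deriv f1 (s / 2)) * (r - s) : ℝ) : ℂ) • Conj1 H1 f1 s ⁅H1, B⁆)
      + Complex.I ^ 2 • ∫ s in (0 : ℝ)..r,
          (((f1 s - 1 / 2 * f1 (s / 2)) ^ 2 * (r - s) : ℝ) : ℂ) • Conj1 H1 f1 s ⁅H1, ⁅H1, B⁆⁆ := by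
  have hd := hf1.differentiable one_ne_zero
  simp only [Conj1_eq_expConj]
  rw [expConj_ofReal_eq_add_integral H1 B Complex.I (by simp)
    (fun s => (hasDerivAt_integral_div_self hf1.continuous 2 s).congr_deriv (by ring))
    (hasDerivAt_sub_half_mul_comp_half hd) (by fun_prop),
    show r * (f1 0 - 1 / 2 * f1 (0 / 2)) = r * f1 0 / 2 by rw [zero_div]; ring]

theorem Conj2_eq_add_integral (hf2 : ContDiff ℝ 1 f2) (r : ℝ) (B : Mat n) :
    Conj2 H2 f2 r B = B + (-Complex.I * (r * f2 0 : ℝ)) • ⁅H2, B⁆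
      + (-Complex.I) • (∫ s in (0 : ℝ)..r,
          ((deriv f2 s * (r - s) : ℝ) : ℂ) • Conj2 H2 f2 s ⁅H2, B⁆)
      + (-Complex.I) ^ 2 • ∫ s in (0 : ℝ)..r,
          ((f2 s ^ 2 * (r - s) : ℝ) : ℂ) • Conj2 H2 f2 s ⁅H2, ⁅H2, B⁆⁆ := by
  simp only [Conj2_eq_expConj]
  exact expConj_ofReal_eq_add_integral H2 B (-Complex.I) (by simp)
    (fun s => (hf2.continuous.integral_hasStrictDerivAt 0 s).hasDerivAt)
    (fun s => (hf2.differentiable one_ne_zero s).hasDerivAt) (hf2.continuous_deriv le_rfl) r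

def conjugationDefect (f1 f2 : ℝ → ℝ) (r : ℝ) : Mat n :=
  (Complex.I * f2 r) • (Conj1 H1 f1 r H2 - H2)
    + (Complex.I * (f1 (r / 2) / 2 : ℝ)) • (H1 - Conj2 H2 f2 r H1)

theorem continuous_conjugationDefect (hf1 : Continuous f1) (hf2 : Continuous f2) :
    Continuous (conjugationDefect H1 H2 f1 f2) := by
  have := continuous_integral_div_self hf1 2
  have := intervalIntegral.continuous_primitive (μ := volume) hf2.intervalIntegrable 0
  unfold conjugationDefect
  simp only [Conj1_eq_expConj, Conj2_eq_expConj]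
  fun_prop

theorem Eg2_eq_conjugationDefect (hf1 : ContDiff ℝ 1 f1) (hf2 : ContDiff ℝ 1 f2) (r : ℝ) :
    Eg2 H1 H2 f1 f2 r = conjugationDefect H1 H2 f1 f2 r := by
  have hd1 := hf1.differentiable one_ne_zero
  have hd2 := hf2.differentiable one_ne_zero
  have hFTC2 : ∫ s in (0 : ℝ)..r, deriv f2 s = f2 r - f2 0 :=
    intervalIntegral.integral_deriv_eq_sub (fun x _ => hd2 x)
      ((hf2.continuous_deriv le_rfl).intervalIntegrable _ _)
  have hFTC1 : ∫ s in (0 : ℝ)..r, deriv f1 (s / 2) = 2 * (f1 (r / 2) - f1 0) := by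
    rw [intervalIntegral.integral_comp_div _ two_ne_zero, zero_div,
      intervalIntegral.integral_deriv_eq_sub (fun x _ => hd1 x)
        ((hf1.continuous_deriv le_rfl).intervalIntegrable _ _), smul_eq_mul]
  rw [Eg2, conjugationDefect, Conj1_eq_add_integral H1 hf1, Conj2_eq_add_integral H2 hf2, hFTC1,
    hFTC2]
  simp only [matComm_eq_lie, ← lie_skew H1 H2, lie_neg, Conj1_eq_expConj, Conj2_eq_expConj,
    expConj_neg_right, smul_neg, intervalIntegral.integral_neg, Complex.ofReal_mul, mul_smul,
    intervalIntegral.integral_smul]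
  match_scalars <;> grind [Complex.I_sq]

def trotterDefect (f1 f2 : ℝ → ℝ) (s : ℝ) : Mat n :=
  mexp ((-Complex.I * ((∫ x in (s / 2)..s, f1 x : ℝ) : ℂ)) • H1) *
    conjugationDefect H1 H2 f1 f2 s *
    mexp ((-Complex.I * ((∫ x in (0 : ℝ)..s, f2 x : ℝ) : ℂ)) • H2) *
    mexp ((-Complex.I * ((∫ x in (0 : ℝ)..(s / 2), f1 x : ℝ) : ℂ)) • H1)

theorem continuous_trotterDefect (hf1 : Continuous f1) (hf2 : Continuous f2) :
    Continuous (trotterDefect H1 H2 f1 f2) := by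
  have := continuous_integral_div_self hf1 2
  have := continuous_integral_div hf1 0 2
  have := intervalIntegral.continuous_primitive (μ := volume) hf2.intervalIntegrable 0
  have := continuous_conjugationDefect H1 H2 hf1 hf2
  unfold trotterDefect mexp
  fun_prop

theorem Ug2_self (a : ℝ) : Ug2 H1 H2 f1 f2 a a = 1 := by
  simp [Ug2, mexp]

theorem hasDerivAt_Ug2 (hf1 : Continuous f1) (hf2 : Continuous f2) (s : ℝ) :
    HasDerivAt (fun s => Ug2 H1 H2 f1 f2 s 0)
      (trotterDefect H1 H2 f1 f2 s - Complex.I • (Ham H1 H2 f1 f2 s * Ug2 H1 H2 f1 f2 s 0)) s := by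
  have hA := hasDerivAt_exp_smul H1
    ((hasDerivAt_integral_div_self hf1 2 s).ofReal_comp.const_mul (-Complex.I))
  have hB := hasDerivAt_exp_smul H2
    ((hf2.integral_hasStrictDerivAt 0 s).hasDerivAt.ofReal_comp.const_mul (-Complex.I))
  have hC := hasDerivAt_exp_smul H1
    ((hasDerivAt_integral_div hf1 0 2 s).ofReal_comp.const_mul (-Complex.I))
  simp only [trotterDefect, Ug2, zero_add, mexp]
  refine ((hA.mul hB).mul hC).congr_deriv ?_
  simp only [conjugationDefect, Ham, Conj1_eq_expConj, Conj2_eq_expConj, Pi.mul_apply, neg_mul,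
    mul_add, add_mul, mul_sub, sub_mul, smul_add, smul_sub, mul_smul_comm, smul_mul_assoc,
    mul_assoc, exp_neg_smul_mul_expConj_mul, expConj_mul_exp_smul_mul,
    (commute_exp_smul H1 _).left_comm]
  push_cast
  module

end Trotter

theorem error_representation_second_order_generalized_Trotter_general
    {n : ℕ} (H1 H2 : Mat n)
    (hH1 : H1.IsHermitian) (hH2 : H2.IsHermitian)
    (f1 f2 : ℝ → ℝ) (hf1 : ContDiff ℝ 1 f1) (hf2 : ContDiff ℝ 1 f2)
    (U : ℝ → ℝ → Mat n) (hU : IsEvolution H1 H2 f1 f2 U)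
    (h : ℝ) :
    Ug2 H1 H2 f1 f2 h 0 - U h 0 =
      ∫ s in (0:ℝ)..h,
        U h s * mexp ((-Complex.I * ((∫ s' in (s/2)..s, f1 s' : ℝ) : ℂ)) • H1) *
          Eg2 H1 H2 f1 f2 s *
          mexp ((-Complex.I * ((∫ s' in (0:ℝ)..s, f2 s' : ℝ) : ℂ)) • H2) *
          mexp ((-Complex.I * ((∫ s' in (0:ℝ)..(s/2), f1 s' : ℝ) : ℂ)) • H1) := by
  have hU' : IsPropagator (Ham H1 H2 f1 f2) U := hU
  have hDuhamel := hU'.duhamel (isHermitian_Ham H1 H2 hH1 hH2)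
    (hasDerivAt_Ug2 H1 H2 hf1.continuous hf2.continuous) (a := 0) (b := h)
    (by simpa only [sub_add_cancel] using
      (continuous_trotterDefect H1 H2 hf1.continuous hf2.continuous).intervalIntegrable 0 h)
  rw [Ug2_self, mul_one] at hDuhamel
  rw [hDuhamel]
  refine intervalIntegral.integral_congr fun s _ => ?_
  simp only [sub_add_cancel, trotterDefect, Eg2_eq_conjugationDefect H1 H2 hf1 hf2, mul_assoc]

/-- **Error representation of the second-order generalized Trotter formula.** -/
theorem error_representation_second_order_generalized_Trotter
    {n : ℕ} (hn : 0 < n) (H1 H2 : Mat n)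
    (hH1 : H1.IsHermitian) (hH2 : H2.IsHermitian)
    (f1 f2 : ℝ → ℝ) (hf1 : ContDiff ℝ 1 f1) (hf2 : ContDiff ℝ 1 f2)
    (U : ℝ → ℝ → Mat n) (hU : IsEvolution H1 H2 f1 f2 U)
    (h : ℝ) (hh : 0 ≤ h) :
    Ug2 H1 H2 f1 f2 h 0 - U h 0 =
      ∫ s in (0:ℝ)..h,
        U h s * mexp ((-Complex.I * ((∫ s' in (s/2)..s, f1 s' : ℝ) : ℂ)) • H1) *
          Eg2 H1 H2 f1 f2 s *
          mexp ((-Complex.I * ((∫ s' in (0:ℝ)..s, f2 s' : ℝ) : ℂ)) • H2) *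
          mexp ((-Complex.I * ((∫ s' in (0:ℝ)..(s/2), f1 s' : ℝ) : ℂ)) • H1) :=
  error_representation_second_order_generalized_Trotter_general H1 H2 hH1 hH2 f1 f2 hf1 hf2 U hU h
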